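/- Let α > 0, c ∈ (0,1), C > 0 and set r_n = c·exp(-C·2^{nα}). Let K be the associated Smith–Volterra–Cantor set and ω = ℝ \ K. Then there exist c', C', L_0 > 0 such that for every 0 < L < L_0: c'·exp(-C'·L^{-α}) ≤ inf_{x∈ℝ} Leb(ω ∩ B(x,L))/Leb(B(x,L)) ≤ C'·exp(-c'·L^{-α}). In particular, ω is α-exponentially thick but not α'-exponentially thick for any α' < α. -/

import Mathlib

/-!
Write `ℓₙ = svcLen r n`. Since `2ⁿ ℓₙ = ∏_{j<n} (1 - r j)` lies between a positive constant and
`1`, `ℓₙ ≍ 2⁻ⁿ`. Given `L`, take `m` with `ℓ_{m+1} ≤ L/2 < ℓₘ`. An interval of length `2L` either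
meets two intervals of stage `m + 1`, and then contains a gap of length
`≥ r m · ℓₘ ≳ L exp(-C 2^{mα})`, or it meets only one, and then the Cantor set fills at most `L/2`
of it; as `2ᵐ ≲ 1/L`, this gives the lower bound. Conversely, if `ℓ_{m+1} ≤ 2L < ℓₘ`, the interval
of length `2L` centred in the first interval of stage `m` meets the complement in measure at most
`∑_{i ≥ m} r i ≲ exp(-C 2^{mα})`, which is `≲ L exp(-c' L^{-α})` because `2ᵐ ≳ 1/L`. Bounds of
these two shapes with exponents `α' < α` are incompatible as `L → 0`.
-/

open MeasureTheory Filter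

noncomputable def svcLen (r : ℕ → ℝ) : ℕ → ℝ
  | 0 => 1
  | n + 1 => (1 - r n) / 2 * svcLen r n

noncomputable def svcLeft (r : ℕ → ℝ) : ℕ → ℕ → ℝ
  | 0, _ => 0
  | n + 1, k =>
      if k % 2 = 0 then svcLeft r n (k / 2)
      else svcLeft r n (k / 2) + svcLen r n - svcLen r (n + 1)

/-- The `n`-th stage of the Smith–Volterra–Cantor construction. -/
noncomputable def svcStage (r : ℕ → ℝ) (n : ℕ) : Set ℝ :=
  ⋃ k ∈ Finset.range (2 ^ n), Set.Icc (svcLeft r n k) (svcLeft r n k + svcLen r n)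

/-- The Smith–Volterra–Cantor set associated with `r`. -/
noncomputable def svcSet (r : ℕ → ℝ) : Set ℝ := ⋂ n, svcStage r n

/-- `ω ⊆ ℝ` is `α`-exponentially thick: there are `C'', c'', L₀'' > 0` with
`Leb(ω ∩ (x-L, x+L)) ≥ c'' · exp(-C'' · L^{-α}) · 2L` for all `0 < L < L₀''` and `x`. -/
def ExpThick1 (α : ℝ) (ω : Set ℝ) : Prop :=
  ∃ C > (0 : ℝ), ∃ c > (0 : ℝ), ∃ L₀ > (0 : ℝ), ∀ L : ℝ, 0 < L → L < L₀ → ∀ x : ℝ,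
    ENNReal.ofReal (c * Real.exp (-C * L ^ (-α))) * volume (Set.Ioo (x - L) (x + L))
      ≤ volume (ω ∩ Set.Ioo (x - L) (x + L))

open Real Set Topology

structure IsSVCRatios (r : ℕ → ℝ) : Prop where
  pos : ∀ n, 0 < r n
  lt_one : ∀ n, r n < 1
  antitone : Antitone r

noncomputable def svcInterval (r : ℕ → ℝ) (n k : ℕ) : Set ℝ :=
  Icc (svcLeft r n k) (svcLeft r n k + svcLen r n)

/-- An initial segment of the gap that follows the `k`-th interval of stage `n + 1`. -/
noncomputable def svcGap (r : ℕ → ℝ) (n k : ℕ) : Set ℝ :=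
  Ioo (svcLeft r (n + 1) k + svcLen r (n + 1))
    (svcLeft r (n + 1) k + svcLen r (n + 1) + r n * svcLen r n)

section Construction

variable {r : ℕ → ℝ}

theorem svcLen_succ (n : ℕ) : svcLen r (n + 1) = (1 - r n) / 2 * svcLen r n := rfl

theorem svcLeft_zero_right (n : ℕ) : svcLeft r n 0 = 0 := by
  induction n with
  | zero => rfl
  | succ n ih => simp [svcLeft, ih]

theorem svcLeft_two_mul (n j : ℕ) : svcLeft r (n + 1) (2 * j) = svcLeft r n j := by
  simp [svcLeft]

theorem svcLeft_two_mul_add_one (n j : ℕ) :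
    svcLeft r (n + 1) (2 * j + 1) = svcLeft r n j + svcLen r n - svcLen r (n + 1) := by
  simp [svcLeft, Nat.add_mod, Nat.add_div]

theorem svcStage_eq_biUnion (n : ℕ) :
    svcStage r n = ⋃ k ∈ Finset.range (2 ^ n), svcInterval r n k := rfl

theorem mem_svcStage {n : ℕ} {x : ℝ} :
    x ∈ svcStage r n ↔ ∃ k < 2 ^ n, x ∈ svcInterval r n k := by
  simp [svcStage_eq_biUnion]

theorem measurableSet_svcStage (n : ℕ) : MeasurableSet (svcStage r n) :=
  Finset.measurableSet_biUnion _ fun _ _ => measurableSet_Icc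

theorem volume_svcInterval (n k : ℕ) :
    volume (svcInterval r n k) = ENNReal.ofReal (svcLen r n) := by
  simp [svcInterval, Real.volume_Icc]

theorem volume_svcGap (n k : ℕ) :
    volume (svcGap r n k) = ENNReal.ofReal (r n * svcLen r n) := by
  simp [svcGap, Real.volume_Ioo]

end Construction

theorem exp_neg_div_one_sub_le_one_sub {x c : ℝ} (hx : 0 ≤ x) (hxc : x ≤ c) (hc : c < 1) :
    exp (-(x / (1 - c))) ≤ 1 - x := by
  have h1x : 0 < 1 - x := by linarith
  calc exp (-(x / (1 - c))) ≤ exp (1 - (1 - x)⁻¹) := by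
        gcongr
        rw [show 1 - (1 - x)⁻¹ = -(x / (1 - x)) by field_simp; ring, neg_le_neg_iff]
        gcongr
    _ ≤ exp (log (1 - x)) := by gcongr; exact one_sub_inv_le_log_of_pos h1x
    _ = 1 - x := exp_log h1x

namespace IsSVCRatios

variable {r : ℕ → ℝ}

theorem svcLen_pos (h : IsSVCRatios r) (n : ℕ) : 0 < svcLen r n := by
  induction n with
  | zero => simp [svcLen]
  | succ n ih => rw [svcLen_succ]; nlinarith [h.lt_one n]

theorem svcLen_succ_le_half (h : IsSVCRatios r) (n : ℕ) : svcLen r (n + 1) ≤ svcLen r n / 2 := by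
  rw [svcLen_succ]; nlinarith [h.pos n, h.svcLen_pos n]

theorem svcLen_succ_le (h : IsSVCRatios r) (n : ℕ) : svcLen r (n + 1) ≤ svcLen r n := by
  linarith [h.svcLen_succ_le_half n, h.svcLen_pos n]

theorem svcLen_le_inv_two_pow (h : IsSVCRatios r) (n : ℕ) : svcLen r n ≤ 2⁻¹ ^ n := by
  induction n with
  | zero => simp [svcLen]
  | succ n ih => rw [pow_succ]; linarith [h.svcLen_succ_le_half n]

theorem two_pow_mul_svcLen_le_one (h : IsSVCRatios r) (n : ℕ) : 2 ^ n * svcLen r n ≤ 1 := by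
  calc 2 ^ n * svcLen r n ≤ 2 ^ n * 2⁻¹ ^ n := by gcongr; exact h.svcLen_le_inv_two_pow n
    _ = 1 := by rw [← mul_pow]; norm_num

theorem exists_svcLen_succ_le_lt (h : IsSVCRatios r) {a : ℝ} (ha0 : 0 < a) (ha1 : a < 1) :
    ∃ m, svcLen r (m + 1) ≤ a ∧ a < svcLen r m := by
  classical
  have hex : ∃ n, svcLen r n ≤ a := by
    obtain ⟨n, hn⟩ := exists_pow_lt_of_lt_one ha0 (by norm_num : (2 : ℝ)⁻¹ < 1)
    exact ⟨n, (h.svcLen_le_inv_two_pow n).trans hn.le⟩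
  obtain ⟨m, hm⟩ : ∃ m, Nat.find hex = m + 1 :=
    Nat.exists_eq_succ_of_ne_zero fun h0 => by
      have := Nat.find_spec hex
      rw [h0] at this
      exact absurd this (by simp [svcLen, ha1])
  exact ⟨m, hm ▸ Nat.find_spec hex, not_le.1 (Nat.find_min hex (by omega))⟩

theorem gap_succ_le (h : IsSVCRatios r) (n : ℕ) :
    r (n + 1) * svcLen r (n + 1) ≤ r n * svcLen r n :=
  mul_le_mul (h.antitone n.le_succ) (h.svcLen_succ_le n) (h.svcLen_pos _).le (h.pos n).le

/-- Consecutive intervals of stage `n + 1` are separated by a gap created at some stage `j ≤ n`,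
of length `r j * svcLen r j ≥ r n * svcLen r n`. -/
theorem svcLeft_add_gap_le_svcLeft_succ (h : IsSVCRatios r) :
    ∀ n k, k + 1 < 2 ^ (n + 1) →
      svcLeft r (n + 1) k + svcLen r (n + 1) + r n * svcLen r n ≤ svcLeft r (n + 1) (k + 1) := by
  intro n
  induction n with
  | zero =>
    intro k hk
    obtain rfl : k = 0 := by omega
    simp [svcLeft, svcLen]
    linarith
  | succ n ih =>
    intro k hk
    obtain ⟨j, rfl | rfl⟩ := Nat.even_or_odd' k
    · rw [svcLeft_two_mul, svcLeft_two_mul_add_one, svcLen_succ (n + 1)]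
      nlinarith [h.pos (n + 1), h.svcLen_pos (n + 1)]
    · have hj : j + 1 < 2 ^ (n + 1) := by rw [pow_succ] at hk ⊢; omega
      rw [svcLeft_two_mul_add_one, show 2 * j + 1 + 1 = 2 * (j + 1) by ring, svcLeft_two_mul]
      linarith [ih j hj, h.gap_succ_le n]

theorem svcLeft_add_gap_le_svcLeft (h : IsSVCRatios r) {n k₁ k₂ : ℕ} (h₁₂ : k₁ < k₂)
    (h₂ : k₂ < 2 ^ (n + 1)) :
    svcLeft r (n + 1) k₁ + svcLen r (n + 1) + r n * svcLen r n ≤ svcLeft r (n + 1) k₂ := by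
  induction k₂, h₁₂ using Nat.le_induction with
  | base => exact h.svcLeft_add_gap_le_svcLeft_succ n k₁ h₂
  | succ k₂ hk ih =>
    linarith [ih (by omega), h.svcLeft_add_gap_le_svcLeft_succ n k₂ h₂, h.svcLen_pos (n + 1),
      mul_pos (h.pos n) (h.svcLen_pos n)]

theorem svcLeft_mono (h : IsSVCRatios r) {n k₁ k₂ : ℕ} (h₁₂ : k₁ ≤ k₂) (h₂ : k₂ < 2 ^ n) :
    svcLeft r n k₁ ≤ svcLeft r n k₂ := by
  rcases h₁₂.eq_or_lt with rfl | hlt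
  · rfl
  cases n with
  | zero => omega
  | succ n =>
    linarith [h.svcLeft_add_gap_le_svcLeft hlt h₂, h.svcLen_pos (n + 1),
      mul_pos (h.pos n) (h.svcLen_pos n)]

theorem svcGap_subset_compl_svcSet (h : IsSVCRatios r) {n k : ℕ} (hk : k + 1 < 2 ^ (n + 1)) :
    svcGap r n k ⊆ (svcSet r)ᶜ := by
  intro y hy hyK
  obtain ⟨k', hk', hyk'⟩ := mem_svcStage.1 (mem_iInter.1 hyK (n + 1))
  rcases le_or_gt k' k with hle | hgt
  · linarith [h.svcLeft_mono (n := n + 1) hle (by omega), hyk'.2, hy.1]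
  · linarith [h.svcLeft_add_gap_le_svcLeft_succ n k hk, h.svcLeft_mono hgt hk', hyk'.1, hy.2]

theorem svcStage_succ_subset (h : IsSVCRatios r) (n : ℕ) : svcStage r (n + 1) ⊆ svcStage r n := by
  intro x hx
  obtain ⟨k, hk, hxk⟩ := mem_svcStage.1 hx
  refine mem_svcStage.2 ⟨k / 2, by rw [pow_succ] at hk; omega, ?_⟩
  have hle := h.svcLen_succ_le n
  obtain ⟨j, rfl | rfl⟩ := Nat.even_or_odd' k
  · rw [svcInterval, svcLeft_two_mul] at hxk
    rw [show 2 * j / 2 = j by omega]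
    exact ⟨hxk.1, by linarith [hxk.2]⟩
  · rw [svcInterval, svcLeft_two_mul_add_one] at hxk
    rw [show (2 * j + 1) / 2 = j by omega]
    exact ⟨by linarith [hxk.1], by linarith [hxk.2]⟩

theorem svcStage_anti (h : IsSVCRatios r) : Antitone (svcStage r) :=
  antitone_nat_of_succ_le h.svcStage_succ_subset

theorem disjoint_svcInterval (h : IsSVCRatios r) {n k₁ k₂ : ℕ} (hlt : k₁ < k₂) (hk₂ : k₂ < 2 ^ n) :
    Disjoint (svcInterval r n k₁) (svcInterval r n k₂) := by
  cases n with
  | zero => omega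
  | succ n =>
    refine Set.disjoint_left.2 fun x hx₁ hx₂ => ?_
    linarith [h.svcLeft_add_gap_le_svcLeft hlt hk₂, mul_pos (h.pos n) (h.svcLen_pos n), hx₁.2,
      hx₂.1]

theorem volume_svcStage (h : IsSVCRatios r) (n : ℕ) :
    volume (svcStage r n) = ENNReal.ofReal (2 ^ n * svcLen r n) := by
  have hdisj : (↑(Finset.range (2 ^ n)) : Set ℕ).PairwiseDisjoint (svcInterval r n) := by
    intro k₁ hk₁ k₂ hk₂ hne
    rw [Finset.coe_range, mem_Iio] at hk₁ hk₂
    rcases hne.lt_or_gt with hlt | hlt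
    exacts [h.disjoint_svcInterval hlt hk₂, (h.disjoint_svcInterval hlt hk₁).symm]
  rw [svcStage_eq_biUnion, measure_biUnion_finset hdisj fun k _ => measurableSet_Icc]
  simp only [volume_svcInterval, Finset.sum_const, Finset.card_range, nsmul_eq_mul]
  rw [← ENNReal.ofReal_natCast, ← ENNReal.ofReal_mul (by positivity)]
  norm_num

theorem volume_svcStage_diff_succ_le (h : IsSVCRatios r) (n : ℕ) :
    volume (svcStage r n \ svcStage r (n + 1)) ≤ ENNReal.ofReal (r n) := by
  rw [measure_sdiff (h.svcStage_succ_subset n) (measurableSet_svcStage _).nullMeasurableSet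
    (by rw [h.volume_svcStage]; exact ENNReal.ofReal_ne_top), h.volume_svcStage, h.volume_svcStage,
    ← ENNReal.ofReal_sub _ (by have := h.svcLen_pos (n + 1); positivity), svcLen_succ]
  refine ENNReal.ofReal_le_ofReal ?_
  have := h.two_pow_mul_svcLen_le_one n
  calc 2 ^ n * svcLen r n - 2 ^ (n + 1) * ((1 - r n) / 2 * svcLen r n)
      = r n * (2 ^ n * svcLen r n) := by ring
    _ ≤ r n := mul_le_of_le_one_right (h.pos n).le this

theorem svcStage_diff_svcSet_subset (h : IsSVCRatios r) (m : ℕ) :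
    svcStage r m \ svcSet r ⊆ ⋃ i, svcStage r (m + i) \ svcStage r (m + i + 1) := by
  classical
  rintro x ⟨hxm, hxK⟩
  have hex : ∃ n, x ∉ svcStage r n := by simpa [svcSet] using hxK
  have hmj : m < Nat.find hex := by
    by_contra! hle
    exact Nat.find_spec hex (h.svcStage_anti hle hxm)
  refine mem_iUnion.2 ⟨Nat.find hex - m - 1, ?_, ?_⟩
  · exact not_not.1 (Nat.find_min hex (by omega))
  · rw [show m + (Nat.find hex - m - 1) + 1 = Nat.find hex by omega]
    exact Nat.find_spec hex

theorem volume_svcStage_diff_svcSet_le (h : IsSVCRatios r) (hs : Summable r) (m : ℕ) :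
    volume (svcStage r m \ svcSet r) ≤ ENNReal.ofReal (∑' i, r (m + i)) := by
  have hs' : Summable fun i => r (m + i) := by
    simpa only [add_comm m] using (summable_nat_add_iff m).2 hs
  calc volume (svcStage r m \ svcSet r)
      ≤ ∑' i, volume (svcStage r (m + i) \ svcStage r (m + i + 1)) :=
        (measure_mono (h.svcStage_diff_svcSet_subset m)).trans (measure_iUnion_le _)
    _ ≤ ∑' i, ENNReal.ofReal (r (m + i)) :=
        ENNReal.tsum_le_tsum fun i => h.volume_svcStage_diff_succ_le (m + i)
    _ = ENNReal.ofReal (∑' i, r (m + i)) :=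
        (ENNReal.ofReal_tsum_of_nonneg (fun i => (h.pos _).le) hs').symm

theorem exists_svcGap_subset_or_svcStage_inter_subset (h : IsSVCRatios r) (m : ℕ) {S : Set ℝ}
    (hS : S.OrdConnected) :
    (∃ k, k + 1 < 2 ^ (m + 1) ∧ svcGap r m k ⊆ S) ∨
      ∃ k, svcStage r (m + 1) ∩ S ⊆ svcInterval r (m + 1) k := by
  by_cases H : ∃ k₁ k₂, k₁ < k₂ ∧ k₂ < 2 ^ (m + 1) ∧
      (svcInterval r (m + 1) k₁ ∩ S).Nonempty ∧ (svcInterval r (m + 1) k₂ ∩ S).Nonempty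
  · obtain ⟨k₁, k₂, h₁₂, hk₂, ⟨p, hp, hpS⟩, ⟨q, hq, hqS⟩⟩ := H
    refine Or.inl ⟨k₁, by omega, fun y hy => hS.out hpS hqS ⟨?_, ?_⟩⟩
    · linarith [hp.2, hy.1]
    · linarith [hq.1, hy.2, h.svcLeft_add_gap_le_svcLeft h₁₂ hk₂]
  right
  rcases (svcStage r (m + 1) ∩ S).eq_empty_or_nonempty with hem | ⟨y, hy, hyS⟩
  · exact ⟨0, hem.subset.trans (empty_subset _)⟩
  obtain ⟨k₀, hk₀, hyk₀⟩ := mem_svcStage.1 hy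
  refine ⟨k₀, fun z ⟨hz, hzS⟩ => ?_⟩
  obtain ⟨k, hk, hzk⟩ := mem_svcStage.1 hz
  rcases lt_trichotomy k k₀ with hlt | rfl | hlt
  · exact absurd ⟨k, k₀, hlt, hk₀, ⟨z, hzk, hzS⟩, ⟨y, hyk₀, hyS⟩⟩ H
  · exact hzk
  · exact absurd ⟨k₀, k, hlt, hk, ⟨y, hyk₀, hyS⟩, ⟨z, hzk, hzS⟩⟩ H

theorem min_le_volume_compl_svcSet_inter (h : IsSVCRatios r) (m : ℕ) {S : Set ℝ}
    (hS : S.OrdConnected) :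
    min (ENNReal.ofReal (r m * svcLen r m)) (volume S - ENNReal.ofReal (svcLen r (m + 1)))
      ≤ volume ((svcSet r)ᶜ ∩ S) := by
  rcases h.exists_svcGap_subset_or_svcStage_inter_subset m hS with ⟨k, hk, hgap⟩ | ⟨k, hsub⟩
  · refine min_le_of_left_le ?_
    rw [← volume_svcGap m k]
    exact measure_mono (subset_inter (h.svcGap_subset_compl_svcSet hk) hgap)
  · refine min_le_of_right_le ?_
    rw [← volume_svcInterval (m + 1) k, inter_comm, ← sdiff_eq]
    refine le_measure_sdiff.trans (measure_mono fun y ⟨hyS, hyI⟩ => ⟨hyS, fun hyK => hyI ?_⟩)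
    exact hsub ⟨mem_iInter.1 hyK (m + 1), hyS⟩

theorem volume_compl_svcSet_inter_Ioo_le (h : IsSVCRatios r) (hs : Summable r) {m : ℕ} {L : ℝ}
    (hL : 2 * L ≤ svcLen r m) :
    volume ((svcSet r)ᶜ ∩ Ioo (svcLen r m / 2 - L) (svcLen r m / 2 + L))
      ≤ ENNReal.ofReal (∑' i, r (m + i)) := by
  have hball : Ioo (svcLen r m / 2 - L) (svcLen r m / 2 + L) ⊆ svcStage r m := fun z hz =>
    mem_svcStage.2 ⟨0, Nat.two_pow_pos m, by
      rw [svcInterval, svcLeft_zero_right]; constructor <;> linarith [hz.1, hz.2]⟩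
  calc volume ((svcSet r)ᶜ ∩ Ioo (svcLen r m / 2 - L) (svcLen r m / 2 + L))
      ≤ volume (svcStage r m \ svcSet r) := measure_mono fun z hz => ⟨hball hz.2, hz.1⟩
    _ ≤ ENNReal.ofReal (∑' i, r (m + i)) := h.volume_svcStage_diff_svcSet_le hs m

theorem exp_neg_sum_div_le_two_pow_mul_svcLen (h : IsSVCRatios r) {c : ℝ} (hc : ∀ n, r n ≤ c)
    (hc1 : c < 1) (n : ℕ) :
    exp (-(∑ j ∈ Finset.range n, r j) / (1 - c)) ≤ 2 ^ n * svcLen r n := by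
  induction n with
  | zero => simp [svcLen]
  | succ n ih =>
    have hsplit : -(∑ j ∈ Finset.range (n + 1), r j) / (1 - c)
        = -(r n / (1 - c)) + -(∑ j ∈ Finset.range n, r j) / (1 - c) := by
      rw [Finset.sum_range_succ]; ring
    calc exp (-(∑ j ∈ Finset.range (n + 1), r j) / (1 - c))
        = exp (-(r n / (1 - c))) * exp (-(∑ j ∈ Finset.range n, r j) / (1 - c)) := by
          rw [hsplit, exp_add]
      _ ≤ (1 - r n) * (2 ^ n * svcLen r n) :=
          mul_le_mul (exp_neg_div_one_sub_le_one_sub (h.pos n).le (hc n) hc1) ih (exp_pos _).le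
            (by linarith [h.lt_one n])
      _ = 2 ^ (n + 1) * svcLen r (n + 1) := by rw [svcLen_succ]; ring

theorem exp_neg_tsum_div_le_two_pow_mul_svcLen (h : IsSVCRatios r) (hs : Summable r) {c : ℝ}
    (hc : ∀ n, r n ≤ c) (hc1 : c < 1) (n : ℕ) :
    exp (-(∑' i, r i) / (1 - c)) ≤ 2 ^ n * svcLen r n := by
  refine le_trans ?_ (h.exp_neg_sum_div_le_two_pow_mul_svcLen hc hc1 n)
  gcongr
  exact hs.sum_le_tsum _ fun i _ => (h.pos i).le

end IsSVCRatios

section ExponentialRatios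

variable {r : ℕ → ℝ} {A c C : ℝ}

theorem pow_add_mul_sub_one_le_pow_add (hA : 1 ≤ A) (m i : ℕ) :
    A ^ m + i * (A - 1) ≤ A ^ (m + i) := by
  have h1 : 1 ≤ A ^ m := one_le_pow₀ hA
  have h2 := one_add_mul_sub_le_pow (by linarith : -1 ≤ A) i
  have h3 : 0 ≤ i * (A - 1) := mul_nonneg i.cast_nonneg (by linarith)
  rw [pow_add]
  nlinarith

theorem le_of_eq_mul_exp (hA : 0 ≤ A) (hc0 : 0 ≤ c) (hC : 0 ≤ C)
    (hr : ∀ n, r n = c * exp (-C * A ^ n)) (n : ℕ) : r n ≤ c := by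
  rw [hr]
  exact mul_le_of_le_one_right hc0 (exp_le_one_iff.2 (by nlinarith [pow_nonneg hA n]))

theorem isSVCRatios_of_eq_mul_exp (hA : 1 < A) (hc0 : 0 < c) (hc1 : c < 1) (hC : 0 < C)
    (hr : ∀ n, r n = c * exp (-C * A ^ n)) : IsSVCRatios r where
  pos n := by rw [hr]; positivity
  lt_one n := (le_of_eq_mul_exp (by linarith) hc0.le hC.le hr n).trans_lt hc1
  antitone := antitone_nat_of_succ_le fun n => by
    rw [hr, hr, neg_mul, neg_mul]
    gcongr
    · exact hA.le
    · exact n.le_succ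

theorem le_mul_geometric_of_eq_mul_exp (hA : 1 ≤ A) (hc0 : 0 ≤ c) (hC : 0 ≤ C)
    (hr : ∀ n, r n = c * exp (-C * A ^ n)) (m i : ℕ) :
    r (m + i) ≤ c * exp (-C * A ^ m) * exp (-C * (A - 1)) ^ i := by
  rw [hr, mul_assoc, ← exp_nat_mul, ← exp_add]
  gcongr
  nlinarith [pow_add_mul_sub_one_le_pow_add hA m i]

theorem summable_of_eq_mul_exp (hA : 1 < A) (hc0 : 0 ≤ c) (hC : 0 < C)
    (hr : ∀ n, r n = c * exp (-C * A ^ n)) (m : ℕ) : Summable fun i => r (m + i) := by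
  refine Summable.of_nonneg_of_le (fun i => by rw [hr]; positivity)
    (le_mul_geometric_of_eq_mul_exp hA.le hc0 hC.le hr m)
    ((summable_geometric_of_lt_one (exp_pos _).le ?_).mul_left _)
  exact exp_lt_one_iff.2 (by nlinarith)

theorem tsum_le_of_eq_mul_exp (hA : 1 < A) (hc0 : 0 ≤ c) (hC : 0 < C)
    (hr : ∀ n, r n = c * exp (-C * A ^ n)) (m : ℕ) :
    ∑' i, r (m + i) ≤ c * (1 - exp (-C * (A - 1)))⁻¹ * exp (-C * A ^ m) := by
  have hq : exp (-C * (A - 1)) < 1 := exp_lt_one_iff.2 (by nlinarith)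
  calc ∑' i, r (m + i) ≤ ∑' i, c * exp (-C * A ^ m) * exp (-C * (A - 1)) ^ i :=
        (summable_of_eq_mul_exp hA hc0 hC hr m).tsum_le_tsum
          (le_mul_geometric_of_eq_mul_exp hA.le hc0 hC.le hr m)
          ((summable_geometric_of_lt_one (exp_pos _).le hq).mul_left _)
    _ = c * (1 - exp (-C * (A - 1)))⁻¹ * exp (-C * A ^ m) := by
        rw [tsum_mul_left, tsum_geometric_of_lt_one (exp_pos _).le hq]; ring

end ExponentialRatios

theorem one_lt_two_rpow {α : ℝ} (hα : 0 < α) : 1 < (2 : ℝ) ^ α :=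
  one_lt_rpow (by norm_num) hα

theorem mul_rpow_neg_eq_div_rpow {a L : ℝ} (ha : 0 ≤ a) (hL : 0 < L) (α : ℝ) :
    a ^ α * L ^ (-α) = (a / L) ^ α := by
  rw [div_rpow ha hL.le, rpow_neg hL.le, div_eq_mul_inv]

theorem exists_mul_exp_neg_mul_rpow_le {κ α : ℝ} (hκ : 0 < κ) (hα : 0 < α) :
    ∃ M > 0, ∀ s : ℝ, 0 ≤ s → s * exp (-(κ * s ^ α)) ≤ M := by
  set k := ⌈α⁻¹⌉₊
  refine ⟨1 + k.factorial / κ ^ k, by positivity, fun s hs => ?_⟩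
  have hu : 0 ≤ s ^ α := rpow_nonneg hs α
  have hpow : (s ^ α) ^ k ≤ k.factorial / κ ^ k * exp (κ * s ^ α) := by
    have := pow_div_factorial_le_exp _ (mul_nonneg hκ.le hu) k
    rw [mul_pow, div_le_iff₀ (by positivity)] at this
    rw [div_mul_eq_mul_div, le_div_iff₀ (by positivity)]
    linarith
  have hs_le : s ≤ 1 + (s ^ α) ^ k := by
    rcases le_total s 1 with hs1 | hs1
    · linarith [pow_nonneg hu k]
    · calc s = s ^ (1 : ℝ) := (rpow_one s).symm
        _ ≤ s ^ (α * k) := rpow_le_rpow_of_exponent_le hs1 <| by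
            rw [← div_le_iff₀' hα, one_div]; exact Nat.le_ceil _
        _ ≤ 1 + (s ^ α) ^ k := by rw [rpow_mul_natCast hs]; linarith
  rw [← le_div_iff₀ (exp_pos _), exp_neg, div_inv_eq_mul]
  nlinarith [one_le_exp (mul_nonneg hκ.le hu)]

/-- Half of the decay pays for the factor `1 / s ≲ L`, the other half gives `exp (-c' L^{-α})`. -/
theorem exp_neg_mul_rpow_le_of_le_mul {C α M P L s : ℝ} (hC : 0 ≤ C) (hα : 0 < α) (hP : 0 < P)
    (hL : 0 < L) (hs : 0 < s) (hM : s * exp (-(C / 2 * s ^ α)) ≤ M) (hPs : P ≤ 4 * L * s) :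
    exp (-C * s ^ α) ≤ 2 * M / P * exp (-(C / 2 * (P / 4) ^ α) * L ^ (-α)) * (2 * L) := by
  have hM0 : 0 ≤ M := (by positivity : 0 ≤ s * exp _).trans hM
  have hsL : P / 4 / L ≤ s := by rw [div_le_iff₀ hL]; linarith
  have hdecay : (P / 4) ^ α * L ^ (-α) ≤ s ^ α := by
    rw [mul_rpow_neg_eq_div_rpow (by positivity) hL]
    exact rpow_le_rpow (by positivity) hsL hα.le
  have hpoly : exp (-(C / 2 * s ^ α)) ≤ 2 * M / P * (2 * L) := by
    rw [← le_div_iff₀' hs] at hM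
    refine hM.trans ?_
    rw [div_le_iff₀ hs]
    calc M = 2 * M / P * (2 * (P / 4)) := by field_simp; ring
      _ ≤ 2 * M / P * (2 * (L * s)) := by gcongr; linarith
      _ = 2 * M / P * (2 * L) * s := by ring
  calc exp (-C * s ^ α) = exp (-(C / 2 * s ^ α)) * exp (-(C / 2 * s ^ α)) := by
        rw [← exp_add]; ring_nf
    _ ≤ 2 * M / P * (2 * L) * exp (-(C / 2 * (P / 4) ^ α) * L ^ (-α)) := by
        refine mul_le_mul hpoly (exp_le_exp.2 ?_) (exp_pos _).le (by positivity)
        rw [neg_mul, mul_assoc]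
        gcongr
    _ = 2 * M / P * exp (-(C / 2 * (P / 4) ^ α) * L ^ (-α)) * (2 * L) := by ring

section Density

variable {r : ℕ → ℝ} {α c C : ℝ}

theorem ofReal_mul_volume_Ioo_le_volume_compl_svcSet_inter (hα : 0 < α) (hc0 : 0 < c)
    (hc1 : c < 1) (hC : 0 < C) (hr : ∀ n, r n = c * exp (-C * (2 ^ α) ^ n)) {L : ℝ}
    (hL0 : 0 < L) (hL1 : L < 1) (x : ℝ) :
    ENNReal.ofReal (c / 4 * exp (-(C * 2 ^ α) * L ^ (-α))) * volume (Ioo (x - L) (x + L))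
      ≤ volume ((svcSet r)ᶜ ∩ Ioo (x - L) (x + L)) := by
  have h := isSVCRatios_of_eq_mul_exp (one_lt_two_rpow hα) hc0 hc1 hC hr
  obtain ⟨m, hm₁, hm⟩ := h.exists_svcLen_succ_le_lt (half_pos hL0) (by linarith)
  set e := exp (-(C * 2 ^ α) * L ^ (-α))
  have hrm : c * e ≤ r m := by
    have h2m : (2 : ℝ) ^ m ≤ 2 / L := by
      rw [le_div_iff₀ hL0]
      nlinarith [h.two_pow_mul_svcLen_le_one m, pow_pos (two_pos : (0 : ℝ) < 2) m]
    have := rpow_le_rpow (by positivity) h2m hα.le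
    rw [← rpow_pow_comm zero_le_two, ← mul_rpow_neg_eq_div_rpow zero_le_two hL0] at this
    rw [hr]
    exact mul_le_mul_of_nonneg_left (exp_le_exp.2 (by nlinarith)) hc0.le
  have hce : c * e ≤ 1 := hrm.trans (h.lt_one m).le
  rw [Real.volume_Ioo, ← ENNReal.ofReal_mul (by positivity)]
  refine le_trans ?_ (h.min_le_volume_compl_svcSet_inter m ordConnected_Ioo)
  rw [Real.volume_Ioo, ← ENNReal.ofReal_sub _ (h.svcLen_pos _).le]
  refine le_min (ENNReal.ofReal_le_ofReal ?_) (ENNReal.ofReal_le_ofReal ?_)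
  · calc c / 4 * e * (x + L - (x - L)) = c * e * (L / 2) := by ring
      _ ≤ r m * svcLen r m := mul_le_mul hrm hm.le (by positivity) (h.pos m).le
  · nlinarith [exp_pos (-(C * 2 ^ α) * L ^ (-α))]

theorem exists_volume_compl_svcSet_inter_le_ofReal_mul (hα : 0 < α) (hc0 : 0 < c) (hc1 : c < 1)
    (hC : 0 < C) (hr : ∀ n, r n = c * exp (-C * (2 ^ α) ^ n)) :
    ∃ C' > 0, ∃ c' > 0, ∀ L : ℝ, 0 < L → L < 1 / 2 → ∃ x : ℝ,
      volume ((svcSet r)ᶜ ∩ Ioo (x - L) (x + L))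
        ≤ ENNReal.ofReal (C' * exp (-c' * L ^ (-α))) * volume (Ioo (x - L) (x + L)) := by
  have hA := one_lt_two_rpow hα
  have h := isSVCRatios_of_eq_mul_exp hA hc0 hc1 hC hr
  have hs : Summable r := by simpa using summable_of_eq_mul_exp hA hc0.le hC hr 0
  set P := exp (-(∑' i, r i) / (1 - c))
  have hP : ∀ n, P ≤ 2 ^ n * svcLen r n :=
    h.exp_neg_tsum_div_le_two_pow_mul_svcLen hs (le_of_eq_mul_exp (by linarith) hc0.le hC.le hr) hc1
  set K := c * (1 - exp (-C * (2 ^ α - 1)))⁻¹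
  have hK : 0 < K := mul_pos hc0 (inv_pos.2 (sub_pos.2 (exp_lt_one_iff.2 (by nlinarith))))
  obtain ⟨M, hM0, hM⟩ := exists_mul_exp_neg_mul_rpow_le (half_pos hC) hα
  refine ⟨K * (2 * M / P), by positivity, C / 2 * (P / 4) ^ α, by positivity, fun L hL0 hL => ?_⟩
  obtain ⟨m, hm₁, hm⟩ := h.exists_svcLen_succ_le_lt (by positivity : 0 < 2 * L) (by linarith)
  refine ⟨svcLen r m / 2, ?_⟩
  calc volume ((svcSet r)ᶜ ∩ Ioo (svcLen r m / 2 - L) (svcLen r m / 2 + L))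
      ≤ ENNReal.ofReal (∑' i, r (m + i)) := h.volume_compl_svcSet_inter_Ioo_le hs hm.le
    _ ≤ ENNReal.ofReal (K * exp (-C * (2 ^ α) ^ m)) :=
        ENNReal.ofReal_le_ofReal (tsum_le_of_eq_mul_exp hA hc0.le hC hr m)
    _ ≤ ENNReal.ofReal (K * (2 * M / P) * exp (-(C / 2 * (P / 4) ^ α) * L ^ (-α)) * (2 * L)) :=
        ENNReal.ofReal_le_ofReal ?_
    _ = _ := by
        rw [Real.volume_Ioo, ← ENNReal.ofReal_mul (by positivity)]
        ring_nf
  rw [rpow_pow_comm zero_le_two]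
  have hPL : P ≤ 4 * L * 2 ^ m :=
    calc P ≤ 2 ^ (m + 1) * svcLen r (m + 1) := hP _
      _ ≤ 2 ^ (m + 1) * (2 * L) := by gcongr
      _ = 4 * L * 2 ^ m := by ring
  have := exp_neg_mul_rpow_le_of_le_mul hC.le hα (exp_pos _) hL0 (pow_pos two_pos m)
    (hM _ (by positivity)) hPL
  linarith [mul_le_mul_of_nonneg_left this hK.le]

end Density

theorem exists_mul_exp_neg_rpow_lt {α α' a b A B ε : ℝ} (hα' : 0 < α') (hα'α : α' < α)
    (ha : 0 < a) (hA : 0 < A) (hB : 0 < B) (hε : 0 < ε) :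
    ∃ L ∈ Ioo 0 ε, A * exp (-a * L ^ (-α)) < B * exp (-b * L ^ (-α')) := by
  have hT : Tendsto (fun L : ℝ => a * L ^ (-α) - b * L ^ (-α')) (𝓝[>] 0) atTop := by
    have h₁ := tendsto_rpow_neg_nhdsGT_zero (neg_lt_zero.2 hα')
    have h₂ := tendsto_atTop_add_const_right _ (-b)
      ((tendsto_rpow_neg_nhdsGT_zero (neg_lt_zero.2 (sub_pos.2 hα'α))).const_mul_atTop ha)
    refine (h₁.atTop_mul_atTop₀ h₂).congr' ?_
    filter_upwards [self_mem_nhdsWithin] with L (hL : 0 < L)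
    rw [mul_add, mul_left_comm, ← rpow_add hL]
    ring_nf
  obtain ⟨L, hLT, hLε⟩ := ((hT.eventually_gt_atTop (log A - log B)).and (Ioo_mem_nhdsGT hε)).exists
  refine ⟨L, hLε, ?_⟩
  rw [← exp_log hA, ← exp_log hB, ← exp_add, ← exp_add, exp_lt_exp]
  linarith

theorem not_expThick1_of_forall_exists_le {ω : Set ℝ} {α α' C' c' L₁ : ℝ} (hα' : 0 < α')
    (hα'α : α' < α) (hC' : 0 < C') (hc' : 0 < c') (hL₁ : 0 < L₁)
    (H : ∀ L : ℝ, 0 < L → L < L₁ → ∃ x : ℝ, volume (ω ∩ Ioo (x - L) (x + L))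
      ≤ ENNReal.ofReal (C' * exp (-c' * L ^ (-α))) * volume (Ioo (x - L) (x + L))) :
    ¬ ExpThick1 α' ω := by
  rintro ⟨C'', -, c'', hc'', L₀, hL₀, H'⟩
  obtain ⟨L, ⟨hL0, hL⟩, hlt⟩ :=
    exists_mul_exp_neg_rpow_lt (b := C'') hα' hα'α hc' hC' hc'' (lt_min hL₀ hL₁)
  obtain ⟨x, hx⟩ := H L hL0 (hL.trans_le (min_le_right _ _))
  have hle := (H' L hL0 (hL.trans_le (min_le_left _ _)) x).trans hx
  rw [ENNReal.mul_le_mul_iff_left (by simp [hL0]) measure_Ioo_lt_top.ne] at hle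
  exact ((ENNReal.ofReal_lt_ofReal_iff (by positivity)).2 hlt).not_ge hle

/-- For `r n = c · exp(-C · 2^{n α})`, the complement `ω = ℝ \ K` of the associated
Smith–Volterra–Cantor set satisfies the two-sided bound
`c' exp(-C' L^{-α}) ≤ inf_x Leb(ω ∩ B(x,L))/Leb(B(x,L)) ≤ C' exp(-c' L^{-α})`
for all small `L`; in particular `ω` is `α`-exponentially thick, but not
`α'`-exponentially thick for any `0 < α' < α`. -/
theorem svc_complement_exp_thick (α c C : ℝ) (hα : 0 < α) (hc : c ∈ Set.Ioo (0 : ℝ) 1)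
    (hC : 0 < C) (r : ℕ → ℝ)
    (hr : ∀ n, r n = c * Real.exp (-C * (2 : ℝ) ^ ((n : ℝ) * α))) :
    (∃ c' > (0 : ℝ), ∃ C' > (0 : ℝ), ∃ L₀ > (0 : ℝ), ∀ L : ℝ, 0 < L → L < L₀ →
      ENNReal.ofReal (c' * Real.exp (-C' * L ^ (-α)))
          ≤ (⨅ x : ℝ, volume ((svcSet r)ᶜ ∩ Set.Ioo (x - L) (x + L)) /
              volume (Set.Ioo (x - L) (x + L))) ∧
        (⨅ x : ℝ, volume ((svcSet r)ᶜ ∩ Set.Ioo (x - L) (x + L)) /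
              volume (Set.Ioo (x - L) (x + L)))
          ≤ ENNReal.ofReal (C' * Real.exp (-c' * L ^ (-α)))) ∧
    ExpThick1 α (svcSet r)ᶜ ∧
    ∀ α' : ℝ, 0 < α' → α' < α → ¬ ExpThick1 α' (svcSet r)ᶜ := by
  obtain ⟨hc0, hc1⟩ := hc
  have hr' : ∀ n : ℕ, r n = c * exp (-C * (2 ^ α) ^ n) := fun n => by
    rw [hr, mul_comm (n : ℝ), rpow_mul_natCast zero_le_two]
  have hlow := fun L (hL0 : 0 < L) (hL1 : L < 1) =>
    ofReal_mul_volume_Ioo_le_volume_compl_svcSet_inter hα hc0 hc1 hC hr' hL0 hL1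
  obtain ⟨C', hC', c', hc', hup⟩ :=
    exists_volume_compl_svcSet_inter_le_ofReal_mul hα hc0 hc1 hC hr'
  have hB0 : ∀ x L : ℝ, 0 < L → volume (Ioo (x - L) (x + L)) ≠ 0 := fun x L hL => by simp [hL]
  refine ⟨⟨min (c / 4) c', by positivity, max (C * 2 ^ α) C', by positivity, 1 / 2, by norm_num,
    fun L hL0 hL => ⟨le_iInf fun x => ?_, ?_⟩⟩, ⟨C * 2 ^ α, by positivity, c / 4, by positivity, 1,
    one_pos, hlow⟩, fun α' hα' hα'α => not_expThick1_of_forall_exists_le hα' hα'α hC' hc'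
    one_half_pos hup⟩
  · rw [ENNReal.le_div_iff_mul_le (.inl (hB0 x L hL0)) (.inl measure_Ioo_lt_top.ne)]
    refine le_trans ?_ (hlow L hL0 (by linarith) x)
    gcongr
    exacts [min_le_left _ _, le_max_left _ _]
  · obtain ⟨x, hx⟩ := hup L hL0 hL
    refine (iInf_le _ x).trans ?_
    rw [ENNReal.div_le_iff_le_mul (.inl (hB0 x L hL0)) (.inl measure_Ioo_lt_top.ne)]
    refine hx.trans ?_
    gcongr
    exacts [le_max_right _ _, min_le_right _ _]
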